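/- arXiv:2309.02223 — 6 statements merged into one kernel-verified Lean document; each statement's English description precedes it below -/
import Mathlib

section
/- In a sink parity game, if player 0 plays an admissible strategy σ and player 1 plays an admissible strategy τ, then from every starting node the resulting play eventually reaches the sink node ⊤. -/
structure PGame (V : Type) where
  E : V → V → Prop
  isP0 : V → Bool
  p : V → ℤ

namespace PGame

variable {V : Type}

/-- A valid positional strategy for player 0: at every player-0 node it follows an edge. -/
def Strat0Valid (G : PGame V) (σ : V → V) : Prop := ∀ v, G.isP0 v = true → G.E v (σ v)

/-- A valid positional strategy for player 1. -/
def Strat1Valid (G : PGame V) (τ : V → V) : Prop := ∀ v, G.isP0 v = false → G.E v (τ v)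

/-- Edges of the subgraph where player 0 follows `σ` (player 1 keeps all edges). -/
def E0 (G : PGame V) (σ : V → V) (v w : V) : Prop :=
  if G.isP0 v then w = σ v else G.E v w

/-- Edges of the subgraph where player 1 follows `τ` (player 0 keeps all edges). -/
def E1 (G : PGame V) (τ : V → V) (v w : V) : Prop :=
  if G.isP0 v then G.E v w else w = τ v

/-- A cycle of length `k` (given by a `k`-periodic sequence) in the relation `R`. -/
def IsCycle (R : V → V → Prop) (k : ℕ) (c : ℕ → V) : Prop :=
  0 < k ∧ (∀ i, R (c i) (c (i + 1))) ∧ ∀ i, c (i + k) = c i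

/-- The highest priority occurring on the (periodic) cycle `c` is even. -/
def TopEven (G : PGame V) (c : ℕ → V) : Prop :=
  ∃ i, Even (G.p (c i)) ∧ ∀ j, G.p (c j) ≤ G.p (c i)

/-- The highest priority occurring on the (periodic) cycle `c` is odd. -/
def TopOdd (G : PGame V) (c : ℕ → V) : Prop :=
  ∃ i, Odd (G.p (c i)) ∧ ∀ j, G.p (c j) ≤ G.p (c i)

/-- `σ` is an admissible player 0 strategy: valid, and every cycle avoiding the sink
in the subgraph where player 0 follows `σ` has even highest priority. -/
def Admissible0 (G : PGame V) (top : V) (σ : V → V) : Prop :=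
  G.Strat0Valid σ ∧ ∀ k c, IsCycle (G.E0 σ) k c → (∀ i, c i ≠ top) → G.TopEven c

/-- `τ` is an admissible player 1 strategy. -/
def Admissible1 (G : PGame V) (top : V) (τ : V → V) : Prop :=
  G.Strat1Valid τ ∧ ∀ k c, IsCycle (G.E1 τ) k c → (∀ i, c i ≠ top) → G.TopOdd c

/-- `top` is a sink node: unique smallest priority and only the self-loop as outgoing edge. -/
def IsSink (G : PGame V) (top : V) : Prop :=
  (∀ v, v ≠ top → G.p top < G.p v) ∧ (∀ w, G.E top w ↔ w = top)

/-- A sink parity game. -/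
def IsSinkGame (G : PGame V) (top : V) : Prop :=
  G.IsSink top ∧ (∃ σ, G.Admissible0 top σ) ∧ (∃ τ, G.Admissible1 top τ)

/-- One move when both players play their positional strategies. -/
def step (G : PGame V) (σ τ : V → V) (v : V) : V := if G.isP0 v then σ v else τ v

/-- The play from `v` under the strategies `σ`, `τ`. -/
def play (G : PGame V) (σ τ : V → V) (v : V) (n : ℕ) : V := (G.step σ τ)^[n] v

end PGame

/-- In a sink parity game, if player 0 plays an admissible strategy `σ` and player 1
plays an admissible strategy `τ`, then from every starting node the play reaches the sink. -/
theorem stmt1 {V : Type} [Fintype V] (G : PGame V) (top : V) (hs : G.IsSink top)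
    (σ τ : V → V) (hσ : G.Admissible0 top σ) (hτ : G.Admissible1 top τ) :
    ∀ v : V, ∃ n : ℕ, G.play σ τ v n = top := by
  intro v
  set f := G.step σ τ with hf
  -- pigeonhole: the orbit repeats
  obtain ⟨a, b, hab, heq⟩ := Finite.exists_ne_map_eq_of_infinite (fun n : ℕ => f^[n] v)
  wlog hlt : a < b generalizing a b
  · exact this b a (Ne.symm hab) heq.symm (by omega)
  set m := a with hm
  set k := b - a with hk
  have hk0 : 0 < k := by omega
  have hrep : f^[k] (f^[m] v) = f^[m] v := by
    have : f^[k + m] v = f^[m] v := by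
      rw [show k + m = b by omega]; exact heq.symm
    rwa [Function.iterate_add_apply] at this
  set x := f^[m] v with hx
  set c : ℕ → V := fun i => f^[i] x with hc
  have hcyc_per : ∀ i, c (i + k) = c i := by
    intro i
    show f^[i + k] x = f^[i] x
    rw [Function.iterate_add_apply, hrep]
  have hstep : ∀ i, c (i + 1) = f (c i) := by
    intro i
    show f^[i + 1] x = f (f^[i] x)
    rw [Function.iterate_succ_apply']
  have hE0 : PGame.IsCycle (G.E0 σ) k c := by
    refine ⟨hk0, ?_, hcyc_per⟩
    intro i
    rw [hstep i]
    simp only [PGame.E0, hf, PGame.step]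
    by_cases h : G.isP0 (c i) = true
    · simp [h]
    · simp only [Bool.not_eq_true] at h
      simp [h]
      exact hτ.1 _ h
  have hE1 : PGame.IsCycle (G.E1 τ) k c := by
    refine ⟨hk0, ?_, hcyc_per⟩
    intro i
    rw [hstep i]
    simp only [PGame.E1, hf, PGame.step]
    by_cases h : G.isP0 (c i) = true
    · simp [h]
      exact hσ.1 _ h
    · simp only [Bool.not_eq_true] at h
      simp [h]
  by_cases htop : ∀ i, c i ≠ top
  · exfalso
    obtain ⟨i, hie, hiM⟩ := hσ.2 k c hE0 htop
    obtain ⟨j, hjo, hjM⟩ := hτ.2 k c hE1 htop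
    have : G.p (c i) = G.p (c j) := le_antisymm (hjM i) (hiM j)
    rw [this] at hie
    exact (Int.not_odd_iff_even.mpr hie) hjo
  · push_neg at htop
    obtain ⟨i, hi⟩ := htop
    exact ⟨m + i, by
      show f^[m + i] v = top
      rw [add_comm, Function.iterate_add_apply]
      exact hi⟩
end

section
/- In a sink parity game, there cannot exist a cycle avoiding the sink that is simultaneously consistent with an admissible player 0 strategy σ and an admissible player 1 strategy τ; equivalently, the play under any pair of admissible strategies never repeats a node other than ⊤. -/
/-- Edges consistent with both strategies: at player 0 nodes the edge is `(v, σ v)`,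
at player 1 nodes it is `(v, τ v)`. -/
def Eboth {V : Type} (G : PGame V) (σ τ : V → V) (v w : V) : Prop :=
  G.E v w ∧ (G.isP0 v = true → w = σ v) ∧ (G.isP0 v = false → w = τ v)

namespace Function

variable {α : Type*}

theorem isPeriodicPt_of_iterate_eq {f : α → α} {x : α} {m n : ℕ} (hmn : m < n)
    (h : f^[m] x = f^[n] x) : IsPeriodicPt f (n - m) (f^[m] x) := by
  rw [IsPeriodicPt, IsFixedPt, ← iterate_add_apply, Nat.sub_add_cancel hmn.le, h]

theorem IsPeriodicPt.eq_of_iterate_eq_fixedPt {f : α → α} {k i : ℕ} {x y : α} (hk : 0 < k)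
    (hx : IsPeriodicPt f k x) (hy : IsFixedPt f y) (hi : f^[i] x = y) : x = y := by
  have hle : i ≤ k * i := Nat.le_mul_of_pos_left i hk
  calc x = f^[k * i] x := (hx.mul_const i).eq.symm
    _ = f^[k * i - i] (f^[i] x) := by rw [← iterate_add_apply, Nat.sub_add_cancel hle]
    _ = y := by rw [hi, iterate_fixed hy]

end Function

open Function

namespace PGame

variable {V : Type}

theorem IsCycle.mono {R S : V → V → Prop} (hRS : ∀ v w, R v w → S v w) {k : ℕ} {c : ℕ → V}
    (hc : IsCycle R k c) : IsCycle S k c :=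
  ⟨hc.1, fun i => hRS _ _ (hc.2.1 i), hc.2.2⟩

theorem isCycle_iterate {f : V → V} {k : ℕ} {x : V} (hk : 0 < k) (hx : IsPeriodicPt f k x) :
    IsCycle (fun v w => w = f v) k (fun i => f^[i] x) :=
  ⟨hk, fun i => iterate_succ_apply' f i x, fun i => by
    simp only [iterate_add_apply, hx.eq]⟩

theorem not_topEven_and_topOdd (G : PGame V) (c : ℕ → V) : ¬ (G.TopEven c ∧ G.TopOdd c) := by
  rintro ⟨⟨i, hi_even, hi_max⟩, ⟨j, hj_odd, hj_max⟩⟩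
  have hij : G.p (c i) = G.p (c j) := le_antisymm (hj_max i) (hi_max j)
  exact Int.not_odd_iff_even.mpr (hij ▸ hi_even) hj_odd

theorem e0_of_eboth (G : PGame V) {σ τ : V → V} {v w : V} (h : Eboth G σ τ v w) :
    G.E0 σ v w := by
  obtain ⟨hE, hσ, -⟩ := h
  unfold E0
  cases hv : G.isP0 v
  · simpa using hE
  · simpa using hσ hv

theorem e1_of_eboth (G : PGame V) {σ τ : V → V} {v w : V} (h : Eboth G σ τ v w) :
    G.E1 τ v w := by
  obtain ⟨hE, -, hτ⟩ := h
  unfold E1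
  cases hv : G.isP0 v
  · simpa using hτ hv
  · simpa using hE

theorem eboth_step (G : PGame V) {σ τ : V → V} (hσ : G.Strat0Valid σ) (hτ : G.Strat1Valid τ)
    (v : V) : Eboth G σ τ v (G.step σ τ v) := by
  unfold step
  cases hv : G.isP0 v
  · exact ⟨by simpa [hv] using hτ v hv, by simp [hv], by simp [hv]⟩
  · exact ⟨by simpa [hv] using hσ v hv, by simp [hv], by simp [hv]⟩

theorem isFixedPt_step_of_isSink (G : PGame V) {top : V} (hs : G.IsSink top) {σ τ : V → V}
    (hσ : G.Strat0Valid σ) (hτ : G.Strat1Valid τ) : IsFixedPt (G.step σ τ) top :=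
  (hs.2 _).mp (eboth_step G hσ hτ top).1

theorem not_exists_isCycle_eboth (G : PGame V) {top : V} {σ τ : V → V}
    (hσ : G.Admissible0 top σ) (hτ : G.Admissible1 top τ) :
    ¬ ∃ k c, IsCycle (Eboth G σ τ) k c ∧ ∀ i, c i ≠ top := by
  rintro ⟨k, c, hc, hc_top⟩
  exact not_topEven_and_topOdd G c
    ⟨hσ.2 k c (hc.mono fun _ _ => e0_of_eboth G) hc_top,
      hτ.2 k c (hc.mono fun _ _ => e1_of_eboth G) hc_top⟩

end PGame

/-- In a sink parity game there is no cycle avoiding the sink that is simultaneously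
consistent with an admissible player 0 strategy `σ` and an admissible player 1 strategy `τ`;
equivalently, the play under `(σ, τ)` never repeats a node other than the sink. -/
theorem stmt2 {V : Type} (G : PGame V) (top : V) (hs : G.IsSink top)
    (σ τ : V → V) (hσ : G.Admissible0 top σ) (hτ : G.Admissible1 top τ) :
    (¬ ∃ k c, PGame.IsCycle (Eboth G σ τ) k c ∧ ∀ i, c i ≠ top) ∧
    (∀ v m n, m < n → G.play σ τ v m = G.play σ τ v n → G.play σ τ v m = top) := by
  refine ⟨G.not_exists_isCycle_eboth hσ hτ, fun v m n hmn hrep => ?_⟩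
  have hk : 0 < n - m := Nat.sub_pos_of_lt hmn
  have hper := isPeriodicPt_of_iterate_eq hmn hrep
  by_contra hne
  refine G.not_exists_isCycle_eboth hσ hτ
    ⟨n - m, fun i => (G.step σ τ)^[i] (G.play σ τ v m), ?_, fun i hi => hne ?_⟩
  · exact (PGame.isCycle_iterate hk hper).mono fun w _ h => h ▸ G.eboth_step hσ.1 hτ.1 w
  · exact hper.eq_of_iterate_eq_fixedPt hk (G.isFixedPt_step_of_isSink hs hσ.1 hτ.1) hi
end

section
/- If σ is an admissible player 0 strategy in a sink parity game, then the sink ⊤ is reachable from every node in the subgraph obtained by restricting player 0's moves to σ (player 1 keeps all edges). -/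
/-- If `σ` is an admissible player 0 strategy in a sink parity game, then the sink is
reachable from every node in the subgraph where player 0's moves are restricted to `σ`. -/
theorem stmt3 {V : Type} [Fintype V] (G : PGame V) (top : V) (hs : G.IsSink top)
    (hτ : ∃ τ, G.Admissible1 top τ) (σ : V → V) (hσ : G.Admissible0 top σ) :
    ∀ v : V, Relation.ReflTransGen (G.E0 σ) v top := by
  obtain ⟨τ, hτv, hτcyc⟩ := hτ
  obtain ⟨hσv, hσcyc⟩ := hσ
  intro v
  set f := G.step σ τ with hf
  have hE0 : ∀ w, G.E0 σ w (f w) := by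
    intro w
    by_cases h : G.isP0 w
    · simp [PGame.E0, PGame.step, h, hf]
    · simp only [Bool.not_eq_true] at h
      simp [PGame.E0, PGame.step, h, hτv w h, hf]
  have hE1 : ∀ w, G.E1 τ w (f w) := by
    intro w
    by_cases h : G.isP0 w
    · simp [PGame.E1, PGame.step, h, hσv w h, hf]
    · simp only [Bool.not_eq_true] at h
      simp [PGame.E1, PGame.step, h, hf]
  have hreach : ∀ n, Relation.ReflTransGen (G.E0 σ) v (f^[n] v) := by
    intro n
    induction n with
    | zero => exact .refl
    | succ n ih => rw [Function.iterate_succ_apply']; exact ih.tail (hE0 _)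
  by_cases htop : ∃ n, f^[n] v = top
  · obtain ⟨n, hn⟩ := htop
    rw [← hn]; exact hreach n
  · push_neg at htop
    exfalso
    obtain ⟨a, b, hne, hab⟩ := Finite.exists_ne_map_eq_of_infinite (fun n => f^[n] v)
    wlog hlt : a < b generalizing a b
    · exact this b a hne.symm hab.symm (by omega)
    set k := b - a with hk
    set c : ℕ → V := fun i => f^[i + a] v with hc
    have hstep : ∀ i, c (i + 1) = f (c i) := by
      intro i
      simp only [hc, show i + 1 + a = (i + a) + 1 by ring, Function.iterate_succ_apply']
    have hper : ∀ i, c (i + k) = c i := by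
      intro i
      simp only [hc]
      have h1 : i + k + a = i + b := by omega
      rw [h1, Function.iterate_add_apply]
      have := hab.symm
      rw [this, ← Function.iterate_add_apply]
    have hcyc0 : PGame.IsCycle (G.E0 σ) k c :=
      ⟨by omega, fun i => (hstep i) ▸ hE0 (c i), hper⟩
    have hcyc1 : PGame.IsCycle (G.E1 τ) k c :=
      ⟨by omega, fun i => (hstep i) ▸ hE1 (c i), hper⟩
    have hnt : ∀ i, c i ≠ top := fun i => htop _
    obtain ⟨i, hi, hmax⟩ := hσcyc k c hcyc0 hnt
    obtain ⟨j, hj, hmax'⟩ := hτcyc k c hcyc1 hnt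
    have heq : G.p (c j) = G.p (c i) := le_antisymm (hmax j) (hmax' i)
    rw [heq] at hj
    exact (Int.not_odd_iff_even.mpr hi) hj
end

section
/- For an admissible player 0 strategy σ in a sink parity game, the minimum over all player 1 strategies τ of Θ_{σ,τ}(v) with respect to ⊴ is never equal to -∞ or ∞; hence the valuation Ξ_σ takes values in Z_{≥0}^Q. -/
/-- Play values: `-∞`, a nonnegative integer vector indexed by priorities, or `∞`. -/
inductive EV : Type where
  | neg : EV
  | fin : (ℤ → ℕ) → EV
  | pos : EV

/-- The strict comparison `B ◁ C` on vectors: at the largest priority `q` where they differ,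
either `q` is even and `B q < C q`, or `q` is odd and `B q > C q`. -/
def vlt (B C : ℤ → ℕ) : Prop :=
  ∃ q : ℤ, B q ≠ C q ∧ (∀ r : ℤ, q < r → B r = C r) ∧
    ((Even q ∧ B q < C q) ∨ (Odd q ∧ C q < B q))

/-- The strict order `◁` extended with `-∞` as least and `∞` as greatest element. -/
def elt : EV → EV → Prop
  | EV.neg, EV.neg => False
  | EV.neg, _ => True
  | EV.fin B, EV.fin C => vlt B C
  | EV.fin _, EV.pos => True
  | _, _ => False

/-- The non-strict order `⊴`. -/
def ele (x y : EV) : Prop := elt x y ∨ x = y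

/-- Priority `q` is seen infinitely often along the play from `v`. -/
def InfOft {V : Type} (G : PGame V) (σ τ : V → V) (v : V) (q : ℤ) : Prop :=
  ∀ n, ∃ m, n ≤ m ∧ G.p (G.play σ τ v m) = q

open Classical in
/-- The play value `Θ_{σ,τ}(v)`: if the play reaches the sink `top`, the vector counting
for each priority how often it occurs before reaching `top`; otherwise `∞` or `-∞`
according to the parity of the highest priority seen infinitely often. -/
noncomputable def theta {V : Type} (G : PGame V) (top : V) (σ τ : V → V) (v : V) : EV :=
  if h : ∃ n, G.play σ τ v n = top then
    EV.fin (fun q => ((Finset.range (Nat.find h)).filter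
      (fun j => G.p (G.play σ τ v j) = q)).card)
  else if ∃ q, InfOft G σ τ v q ∧ Even q ∧ ∀ q', InfOft G σ τ v q' → q' ≤ q
    then EV.pos else EV.neg

/-- `τbar` is an optimal counterstrategy of player 1 against `σ`: it minimizes `Θ_{σ,·}`
pointwise with respect to `⊴`. The valuation is `Ξ_σ = Θ_{σ,τbar}`. -/
def OptCounter1 {V : Type} (G : PGame V) (top : V) (σ τbar : V → V) : Prop :=
  G.Strat1Valid τbar ∧
    ∀ τ, G.Strat1Valid τ → ∀ v, ele (theta G top σ τbar v) (theta G top σ τ v)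

/-- `σbar` is an optimal counterstrategy of player 0 against `τ`: it maximizes `Θ_{·,τ}`
pointwise with respect to `⊴`. The valuation is `Ξ_τ = Θ_{σbar,τ}`. -/
def OptCounter0 {V : Type} (G : PGame V) (top : V) (τ σbar : V → V) : Prop :=
  G.Strat0Valid σbar ∧
    ∀ σ, G.Strat0Valid σ → ∀ v, ele (theta G top σ τ v) (theta G top σbar τ v)
section OrderLemmas

lemma vlt_irrefl (B : ℤ → ℕ) : ¬ vlt B B := by
  rintro ⟨q, hq, -, -⟩; exact hq rfl

lemma vlt_asymm {B C : ℤ → ℕ} (h1 : vlt B C) (h2 : vlt C B) : False := by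
  obtain ⟨q1, hne1, hup1, hc1⟩ := h1
  obtain ⟨q2, hne2, hup2, hc2⟩ := h2
  rcases lt_trichotomy q1 q2 with h | h | h
  · exact hne2 (hup1 _ h).symm
  · subst h
    rcases hc1 with ⟨he, hlt⟩ | ⟨ho, hlt⟩ <;> rcases hc2 with ⟨he2, hlt2⟩ | ⟨ho2, hlt2⟩
    · omega
    · exact (Int.not_odd_iff_even.mpr he) ho2
    · exact (Int.not_odd_iff_even.mpr he2) ho
    · omega
  · exact hne1 (hup2 _ h).symm

lemma vlt_trans {B C D : ℤ → ℕ} (h1 : vlt B C) (h2 : vlt C D) : vlt B D := by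
  obtain ⟨q1, hne1, hup1, hc1⟩ := h1
  obtain ⟨q2, hne2, hup2, hc2⟩ := h2
  rcases lt_trichotomy q1 q2 with h | h | h
  · refine ⟨q2, ?_, fun r hr => (hup1 r (h.trans hr)).trans (hup2 r hr), ?_⟩
    · rw [hup1 _ h]; exact hne2
    · rw [hup1 _ h]; exact hc2
  · subst h
    have hpar : (Even q1 ∧ B q1 < C q1 ∧ C q1 < D q1) ∨ (Odd q1 ∧ D q1 < C q1 ∧ C q1 < B q1) := by
      rcases hc1 with ⟨he, hlt⟩ | ⟨ho, hlt⟩ <;> rcases hc2 with ⟨he2, hlt2⟩ | ⟨ho2, hlt2⟩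
      · exact Or.inl ⟨he, hlt, hlt2⟩
      · exact absurd ho2 (Int.not_odd_iff_even.mpr he)
      · exact absurd ho (Int.not_odd_iff_even.mpr he2)
      · exact Or.inr ⟨ho, hlt2, hlt⟩
    refine ⟨q1, ?_, fun r hr => (hup1 r hr).trans (hup2 r hr), ?_⟩
    · rcases hpar with ⟨-, h1, h2⟩ | ⟨-, h1, h2⟩ <;> omega
    · rcases hpar with ⟨he, h1', h2'⟩ | ⟨ho, h1', h2'⟩
      · exact Or.inl ⟨he, h1'.trans h2'⟩
      · exact Or.inr ⟨ho, h1'.trans h2'⟩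
  · refine ⟨q1, ?_, fun r hr => (hup1 r hr).trans (hup2 r (h.trans hr)), ?_⟩
    · rw [← hup2 _ h]; exact hne1
    · rw [← hup2 _ h]; exact hc1

/-- Totality on vectors whose difference set is contained in a finite set. -/
lemma vlt_total {B C : ℤ → ℕ} (S : Finset ℤ) (hB : ∀ q ∉ S, B q = C q) (hne : B ≠ C) :
    vlt B C ∨ vlt C B := by
  classical
  have hT : (S.filter (fun q => B q ≠ C q)).Nonempty := by
    by_contra h
    apply hne; funext q
    by_cases hq : q ∈ S
    · by_contra hc
      exact h ⟨q, Finset.mem_filter.mpr ⟨hq, hc⟩⟩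
    · exact hB q hq
  set T := S.filter (fun q => B q ≠ C q) with hTdef
  obtain ⟨hmem, hmax⟩ : T.max' hT ∈ T ∧ ∀ r ∈ T, r ≤ T.max' hT :=
    ⟨T.max'_mem hT, fun r hr => T.le_max' r hr⟩
  set q := T.max' hT with hq
  have hqne : B q ≠ C q := (Finset.mem_filter.mp hmem).2
  have hup : ∀ r, q < r → B r = C r := by
    intro r hr
    by_contra hc
    by_cases hrS : r ∈ S
    · exact absurd (hmax r (Finset.mem_filter.mpr ⟨hrS, hc⟩)) (not_le.mpr hr)
    · exact hc (hB r hrS)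
  rcases Int.even_or_odd q with he | ho
  · rcases Nat.lt_or_ge (B q) (C q) with h | h
    · exact Or.inl ⟨q, hqne, hup, Or.inl ⟨he, h⟩⟩
    · exact Or.inr ⟨q, hqne.symm, fun r hr => (hup r hr).symm, Or.inl ⟨he, by omega⟩⟩
  · rcases Nat.lt_or_ge (B q) (C q) with h | h
    · exact Or.inr ⟨q, hqne.symm, fun r hr => (hup r hr).symm, Or.inr ⟨ho, h⟩⟩
    · exact Or.inl ⟨q, hqne, hup, Or.inr ⟨ho, by omega⟩⟩

lemma ele_trans {x y z : EV} (h1 : ele x y) (h2 : ele y z) : ele x z := by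
  rcases h1 with h1 | rfl
  · rcases h2 with h2 | rfl
    · left
      cases x <;> cases y <;> cases z <;> simp_all [elt]
      exact vlt_trans h1 h2
    · exact Or.inl h1
  · exact h2

lemma ele_refl (x : EV) : ele x x := Or.inr rfl

lemma elt_irrefl (x : EV) : ¬ elt x x := by
  cases x <;> simp [elt]
  exact vlt_irrefl _

lemma ele_antisymm {x y : EV} (h1 : ele x y) (h2 : ele y x) : x = y := by
  rcases h1 with h1 | rfl
  · rcases h2 with h2 | rfl
    · exfalso
      cases x <;> cases y <;> simp_all [elt]
      exact vlt_asymm h1 h2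
    · rfl
  · rfl

/-- addp: add one occurrence of priority q. -/
def addp (q : ℤ) (B : ℤ → ℕ) : ℤ → ℕ := fun r => B r + (if r = q then 1 else 0)

lemma vlt_addp {p : ℤ} {B C : ℤ → ℕ} (h : vlt B C) : vlt (addp p B) (addp p C) := by
  obtain ⟨q, hne, hup, hc⟩ := h
  refine ⟨q, ?_, fun r hr => by simp [addp, hup r hr], ?_⟩
  · simp only [addp]; omega
  · simp only [addp]
    rcases hc with ⟨he, h⟩ | ⟨ho, h⟩
    · exact Or.inl ⟨he, by omega⟩
    · exact Or.inr ⟨ho, by omega⟩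

lemma ele_addp {p : ℤ} {B C : ℤ → ℕ} (h : ele (EV.fin B) (EV.fin C)) :
    ele (EV.fin (addp p B)) (EV.fin (addp p C)) := by
  rcases h with h | h
  · exact Or.inl (vlt_addp h)
  · exact Or.inr (by rw [EV.fin.injEq] at h; rw [h])

end OrderLemmas
section Paths

variable {V : Type}

/-- A path in relation `R` from `v` to `w`, avoiding `top`, whose list of visited
nodes (excluding the endpoint `w`) is `l`. -/
def PathL (R : V → V → Prop) (top : V) : V → List V → V → Prop
  | v, [], w => v = w
  | v, a :: l, w => a = v ∧ v ≠ top ∧ R v (l.headD w) ∧ PathL R top (l.headD w) l w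

/-- The priority-count vector of a list of nodes. -/
def vec (G : PGame V) (l : List V) : ℤ → ℕ :=
  fun q => (l.filter (fun u => decide (G.p u = q))).length

lemma vec_nil (G : PGame V) : vec G [] = fun _ => 0 := rfl

lemma vec_cons (G : PGame V) (a : V) (l : List V) :
    vec G (a :: l) = addp (G.p a) (vec G l) := by
  funext q
  simp only [vec, addp, List.filter_cons]
  by_cases h : G.p a = q
  · simp [h, Nat.add_comm]
  · have h' : ¬ q = G.p a := fun hq => h hq.symm
    simp [h, h']

lemma vec_append (G : PGame V) (a b : List V) (q : ℤ) :
    vec G (a ++ b) q = vec G a q + vec G b q := by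
  simp [vec, List.filter_append]

lemma vec_le_length (G : PGame V) (l : List V) (q : ℤ) : vec G l q ≤ l.length :=
  List.length_filter_le _ _

lemma vec_pos_iff (G : PGame V) (l : List V) (q : ℤ) :
    0 < vec G l q ↔ ∃ x ∈ l, G.p x = q := by
  rw [vec, List.length_pos_iff, Ne, List.filter_eq_nil_iff]
  push_neg
  simp

lemma headD_append (a b : List V) (w : V) :
    (a ++ b).headD w = a.headD (b.headD w) := by
  cases a <;> simp

lemma pathL_append {R : V → V → Prop} {top : V} (a b : List V) (v w : V) :
    PathL R top v (a ++ b) w ↔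
      PathL R top v a (b.headD w) ∧ PathL R top (b.headD w) b w := by
  induction a generalizing v with
  | nil =>
    cases b with
    | nil => simp [PathL]
    | cons x b' =>
      show PathL R top v (x :: b') w ↔ PathL R top v [] x ∧ PathL R top x (x :: b') w
      constructor
      · intro h
        obtain ⟨h1, h2, h3, h4⟩ := h
        subst h1
        exact ⟨rfl, rfl, h2, h3, h4⟩
      · rintro ⟨h1, h2⟩
        have h1' : v = x := h1
        subst h1'
        exact h2
  | cons c a' ih =>
    constructor
    · intro h
      obtain ⟨rfl, h2, h3, h4⟩ := h
      simp only [List.append_eq] at h3 h4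
      rw [headD_append] at h3 h4
      rw [ih] at h4
      exact ⟨⟨rfl, h2, h3, h4.1⟩, h4.2⟩
    · rintro ⟨⟨rfl, h2, h3, h4⟩, h5⟩
      refine ⟨rfl, h2, ?_, ?_⟩
      · simp only [List.append_eq]; rw [headD_append]; exact h3
      · simp only [List.append_eq]; rw [headD_append, ih]; exact ⟨h4, h5⟩

lemma pathL_ne_top {R : V → V → Prop} {top : V} {v w : V} {l : List V}
    (h : PathL R top v l w) : ∀ x ∈ l, x ≠ top := by
  induction l generalizing v with
  | nil => simp
  | cons a l ih =>
    obtain ⟨rfl, hv, hR, hrest⟩ := h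
    intro x hx
    rcases List.mem_cons.mp hx with rfl | hx
    · exact hv
    · exact ih hrest x hx

lemma pathL_getElem_zero {R : V → V → Prop} {top : V} {v w : V} {l : List V}
    (h : PathL R top v l w) (hl : 0 < l.length) : l[0] = v := by
  cases l with
  | nil => simp at hl
  | cons a l => exact h.1

lemma pathL_step {R : V → V → Prop} {top : V} {v w : V} {l : List V}
    (h : PathL R top v l w) :
    ∀ i (hi : i < l.length),
      R l[i] (if h2 : i + 1 < l.length then l[i+1] else w) := by
  induction l generalizing v with
  | nil => intro i hi; simp at hi
  | cons a l ih =>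
    obtain ⟨rfl, hv, hR, hrest⟩ := h
    intro i hi
    cases i with
    | zero =>
      by_cases h2 : 0 + 1 < (a :: l).length
      · rw [dif_pos h2]
        have h0 : 0 < l.length := by simpa using h2
        have : l[0] = l.headD w := by
          cases l with
          | nil => simp at h0
          | cons x l' => simp
        simpa [this] using hR
      · rw [dif_neg h2]
        have : l = [] := by
          cases l with
          | nil => rfl
          | cons x l' => simp at h2
        subst this
        simpa using hR
    | succ j =>
      have hj : j < l.length := by simpa using hi
      have := ih hrest j hj
      by_cases h2 : j + 1 < l.length
      · rw [dif_pos h2] at this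
        rw [dif_pos (by simpa using Nat.succ_lt_succ h2)]
        simpa using this
      · rw [dif_neg h2] at this
        have h2' : ¬ (j + 1 + 1 < (a :: l).length) := by simpa using h2
        rw [dif_neg h2']
        simpa using this

end Paths

section PathsExtra
variable {V : Type}
lemma pathL_headD {R : V → V → Prop} {top v w : V} {l : List V}
    (h : PathL R top v l w) : l.headD w = v := by
  cases l with
  | nil => exact h.symm
  | cons a l => exact h.1
end PathsExtra
section Cycles

variable {V : Type} {G : PGame V} {top : V} {σ : V → V}

/-- From a cyclic path (in `E0 σ`, avoiding `top`) and admissibility of `σ`, the maximal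
priority occurring on the cycle list is even. -/
lemma cycle_max_even (hσ : G.Admissible0 top σ) {u : V} {L : List V}
    (hL : 0 < L.length) (hpath : PathL (G.E0 σ) top u L u) :
    ∃ qs, Even qs ∧ 0 < vec G L qs ∧ ∀ r, qs < r → vec G L r = 0 := by
  set k := L.length with hk
  have hmod : ∀ i : ℕ, i % k < k := fun i => Nat.mod_lt i hL
  set c : ℕ → V := fun i => L[i % k]'(hmod i) with hc
  have hu0 : L[0] = u := pathL_getElem_zero hpath hL
  have hcyc : PGame.IsCycle (G.E0 σ) k c := by
    refine ⟨hL, ?_, ?_⟩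
    · intro i
      have hj := hmod i
      have hstep := pathL_step hpath (i % k) hj
      by_cases h2 : i % k + 1 < k
      · rw [dif_pos h2] at hstep
        have e : (i + 1) % k = i % k + 1 := by
          rw [← Nat.mod_add_mod, Nat.mod_eq_of_lt h2]
        simp only [hc, e]
        exact hstep
      · rw [dif_neg h2] at hstep
        have hsk : i % k + 1 = k := by omega
        have e : (i + 1) % k = 0 := by
          rw [← Nat.mod_add_mod, hsk, Nat.mod_self]
        simp only [hc, e, hu0]
        exact hstep
    · intro i
      have e : (i + k) % k = i % k := Nat.add_mod_right i k
      simp only [hc, e]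
  have hnt : ∀ i, c i ≠ top := fun i => pathL_ne_top hpath _ (List.getElem_mem _)
  obtain ⟨i0, heven, hmax⟩ := hσ.2 k c hcyc hnt
  refine ⟨G.p (c i0), heven, ?_, ?_⟩
  · rw [vec_pos_iff]
    exact ⟨c i0, List.getElem_mem _, rfl⟩
  · intro r hr
    by_contra h
    have hpos : 0 < vec G L r := Nat.pos_of_ne_zero h
    obtain ⟨x, hx, hpx⟩ := (vec_pos_iff G L r).mp hpos
    obtain ⟨j, hjk, rfl⟩ := List.mem_iff_getElem.mp hx
    have hj : j % k = j := Nat.mod_eq_of_lt hjk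
    have hcj : c j = L[j]'hjk := by simp only [hc, hj]
    have hle : G.p (c j) ≤ G.p (c i0) := hmax j
    rw [hcj] at hle
    omega

lemma elt_add_cycle (hσ : G.Admissible0 top σ) {u : V} {L : List V}
    (hL : 0 < L.length) (hpath : PathL (G.E0 σ) top u L u) (D : ℤ → ℕ) :
    elt (EV.fin D) (EV.fin (fun q => D q + vec G L q)) := by
  obtain ⟨qs, heven, hpos, hzero⟩ := cycle_max_even hσ hL hpath
  refine ⟨qs, ?_, fun r hr => by simp [hzero r hr], Or.inl ⟨heven, ?_⟩⟩
  · show D qs ≠ D qs + vec G L qs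
    omega
  · show D qs < D qs + vec G L qs
    omega

end Cycles
section Reduce

variable {V : Type} {G : PGame V} {top : V} {σ : V → V}

lemma sublist_pair {x : V} : ∀ {l : List V}, List.Sublist [x, x] l →
    ∃ l1 l2 l3, l = l1 ++ x :: l2 ++ x :: l3 := by
  intro l h
  induction l with
  | nil => simp at h
  | cons a l ih =>
    rcases h with _ | ⟨h'⟩ | ⟨h'⟩
    case cons h' =>
      obtain ⟨l1, l2, l3, rfl⟩ := ih h'
      exact ⟨a :: l1, l2, l3, rfl⟩
    case cons_cons h' =>
      have hx : x ∈ l := List.singleton_sublist.mp h'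
      obtain ⟨s, t, rfl⟩ := List.append_of_mem hx
      exact ⟨[], s, t, rfl⟩

lemma reduce_path [Fintype V] (hσ : G.Admissible0 top σ) :
    ∀ (n : ℕ) (v : V) (l : List V), l.length ≤ n → PathL (G.E0 σ) top v l top →
    ∃ l', PathL (G.E0 σ) top v l' top ∧ l'.length ≤ Fintype.card V ∧
      ele (EV.fin (vec G l')) (EV.fin (vec G l)) := by
  intro n
  induction n with
  | zero =>
    intro v l hl h
    exact ⟨l, h, by omega, ele_refl _⟩
  | succ n ih =>
    intro v l hl h
    by_cases hlen : l.length ≤ Fintype.card V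
    · exact ⟨l, h, hlen, ele_refl _⟩
    · have hnd : ¬ l.Nodup := fun hd => hlen hd.length_le_card
      obtain ⟨x, hdup⟩ := List.exists_duplicate_iff_not_nodup.mpr hnd
      obtain ⟨A, B', C', rfl⟩ := sublist_pair (List.duplicate_iff_sublist.mp hdup)
      rw [pathL_append] at h
      obtain ⟨hAB, hCp⟩ := h
      rw [pathL_append] at hAB
      obtain ⟨hA, hBp⟩ := hAB
      have hA' : PathL (G.E0 σ) top v A x := by simpa using hA
      have hBp' : PathL (G.E0 σ) top x (x :: B') x := by simpa using hBp
      have hCp' : PathL (G.E0 σ) top x (x :: C') top := by simpa using hCp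
      have hAC : PathL (G.E0 σ) top v (A ++ x :: C') top := by
        rw [pathL_append]
        exact ⟨by simpa using hA', by simpa using hCp'⟩
      have hlt : (A ++ x :: C').length ≤ n := by
        simp only [List.length_append, List.length_cons] at hl ⊢
        omega
      obtain ⟨l', hp1, hp2, hp3⟩ := ih v (A ++ x :: C') hlt hAC
      refine ⟨l', hp1, hp2, ele_trans hp3 (Or.inl ?_)⟩
      have hcyc := elt_add_cycle hσ (L := x :: B') (by simp) hBp' (vec G (A ++ x :: C'))
      have heq : (fun q => vec G (A ++ x :: C') q + vec G (x :: B') q)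
          = vec G (A ++ x :: B' ++ x :: C') := by
        funext q
        simp only [vec_append]
        omega
      rwa [heq] at hcyc

end Reduce
section Plays

variable {V : Type} {G : PGame V} {top : V} {σ τ : V → V}

lemma play_zero (v : V) : G.play σ τ v 0 = v := rfl

lemma play_succ (v : V) (n : ℕ) :
    G.play σ τ v (n + 1) = G.play σ τ (G.step σ τ v) n := by
  simp [PGame.play, Function.iterate_succ_apply]

lemma play_succ' (v : V) (n : ℕ) :
    G.play σ τ v (n + 1) = G.step σ τ (G.play σ τ v n) := by
  simp [PGame.play, Function.iterate_succ_apply']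

lemma play_add (v : V) (m n : ℕ) :
    G.play σ τ v (m + n) = G.play σ τ (G.play σ τ v m) n := by
  simp [PGame.play, Nat.add_comm m n, Function.iterate_add_apply]

lemma step_E0 (hτ : G.Strat1Valid τ) (v : V) : G.E0 σ v (G.step σ τ v) := by
  unfold PGame.E0 PGame.step
  rcases Bool.eq_false_or_eq_true (G.isP0 v) with h | h
  · rw [if_pos (by simp [h]), if_pos (by simp [h])]
  · rw [if_neg (by simp [h]), if_neg (by simp [h])]
    exact hτ v h

lemma step_E1 (hσ : G.Strat0Valid σ) (v : V) : G.E1 τ v (G.step σ τ v) := by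
  unfold PGame.E1 PGame.step
  by_cases h : G.isP0 v
  · simp only [h, if_true]
    exact hσ v h
  · simp [h]

/-- The prefix of a play reaching `top` is a path in `E0 σ`. -/
lemma play_path (hτ : G.Strat1Valid τ) :
    ∀ (n : ℕ) (v : V), G.play σ τ v n = top → (∀ j, j < n → G.play σ τ v j ≠ top) →
      PathL (G.E0 σ) top v ((List.range n).map (G.play σ τ v)) top := by
  intro n
  induction n with
  | zero => intro v hn _; exact hn
  | succ n ih =>
    intro v hn hmin
    have hlist : (List.range (n+1)).map (G.play σ τ v)
        = v :: (List.range n).map (G.play σ τ (G.step σ τ v)) := by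
      have h2 : G.play σ τ v ∘ Nat.succ = G.play σ τ (G.step σ τ v) := by
        funext j
        simp only [Function.comp_apply]
        exact play_succ v j
      rw [List.range_succ_eq_map, List.map_cons, List.map_map, h2]
      rfl
    have hn' : G.play σ τ (G.step σ τ v) n = top := by rw [← play_succ]; exact hn
    have hmin' : ∀ j, j < n → G.play σ τ (G.step σ τ v) j ≠ top := by
      intro j hj
      rw [← play_succ]
      exact hmin (j+1) (by omega)
    have hrest := ih (G.step σ τ v) hn' hmin'
    have hhd : ((List.range n).map (G.play σ τ (G.step σ τ v))).headD top
        = G.step σ τ v := by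
      cases n with
      | zero => simpa [play_zero] using hn'.symm
      | succ m =>
        rw [List.range_succ_eq_map]
        simp [play_zero]
    rw [hlist]
    exact ⟨rfl, hmin 0 (by omega), by rw [hhd]; exact step_E0 hτ v, by rw [hhd]; exact hrest⟩

/-- Counting in a Finset.range filter equals counting in the mapped list. -/
lemma count_eq (G : PGame V) (f : ℕ → V) (q : ℤ) :
    ∀ n, ((Finset.range n).filter (fun j => G.p (f j) = q)).card
      = vec G ((List.range n).map f) q := by
  intro n
  induction n with
  | zero => simp [vec]
  | succ n ih =>
    rw [Finset.range_add_one, Finset.filter_insert]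
    unfold vec
    rw [List.range_succ, List.map_append, List.filter_append, List.length_append]
    by_cases h : G.p (f n) = q
    · rw [if_pos h, Finset.card_insert_of_notMem (by simp)]
      unfold vec at ih
      simp [ih, h]
    · rw [if_neg h]
      unfold vec at ih
      simp [ih, h]

open Classical in
lemma theta_eq_vec (v : V) (h : ∃ n, G.play σ τ v n = top) :
    theta G top σ τ v
      = EV.fin (vec G ((List.range (Nat.find h)).map (G.play σ τ v))) := by
  rw [theta, dif_pos h]
  congr 1
  funext q
  exact count_eq G (G.play σ τ v) q (Nat.find h)

end Plays
section Cycles2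

variable {V : Type} [Fintype V] {G : PGame V} {top : V} {σ τ : V → V}

lemma play_periodic (v : V) :
    ∃ i per : ℕ, 0 < per ∧ ∀ t, G.play σ τ v (i + t + per) = G.play σ τ v (i + t) := by
  obtain ⟨a, b, hab, hfab⟩ := Fintype.exists_ne_map_eq_of_card_lt
    (fun k : Fin (Fintype.card V + 1) => G.play σ τ v k) (by simp)
  rcases Nat.lt_or_ge (a : ℕ) (b : ℕ) with h | h
  · refine ⟨a, b - a, by omega, fun t => ?_⟩
    have hb : (a : ℕ) + (b - a) = b := by omega
    calc G.play σ τ v (a + t + (b - a)) = G.play σ τ v ((a + (b-a)) + t) := by ring_nf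
      _ = G.play σ τ (G.play σ τ v ((a : ℕ) + (b - a))) t := play_add _ _ _
      _ = G.play σ τ (G.play σ τ v a) t := by rw [hb, ← hfab]
      _ = G.play σ τ v (a + t) := (play_add _ _ _).symm
  · have hba : (b : ℕ) < a := by
      rcases Nat.lt_or_ge (b : ℕ) (a : ℕ) with h' | h'
      · exact h'
      · exact absurd (Fin.ext (by omega)) hab
    refine ⟨b, a - b, by omega, fun t => ?_⟩
    have hb : (b : ℕ) + (a - b) = a := by omega
    calc G.play σ τ v (b + t + (a - b)) = G.play σ τ v ((b + (a-b)) + t) := by ring_nf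
      _ = G.play σ τ (G.play σ τ v ((b : ℕ) + (a - b))) t := play_add _ _ _
      _ = G.play σ τ (G.play σ τ v b) t := by rw [hb, hfab]
      _ = G.play σ τ v (b + t) := (play_add _ _ _).symm

/-- If the play never reaches top, its tail forms a cycle in `E0 σ` (and `E1 τ`). -/
lemma play_cycle (v : V) (hnot : ∀ n, G.play σ τ v n ≠ top) :
    ∃ (i per : ℕ) (c : ℕ → V), 0 < per ∧ (∀ t, c t = G.play σ τ v (i + t)) ∧
      (∀ t, c (t + per) = c t) ∧ (∀ t, c t ≠ top) ∧
      (∀ t, G.step σ τ (c t) = c (t + 1)) := by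
  obtain ⟨i, per, hper, hp⟩ := play_periodic (σ := σ) (τ := τ) v
  refine ⟨i, per, fun t => G.play σ τ v (i + t), hper, fun t => rfl, ?_, fun t => hnot _, ?_⟩
  · intro t
    show G.play σ τ v (i + (t + per)) = G.play σ τ v (i + t)
    rw [show i + (t + per) = i + t + per by omega]
    exact hp t
  · intro t
    show G.step σ τ (G.play σ τ v (i + t)) = G.play σ τ v (i + (t + 1))
    rw [show i + (t + 1) = (i + t) + 1 by omega, play_succ']

omit [Fintype V] in
lemma isCycle_E0 {per : ℕ} {c : ℕ → V} (hτ : G.Strat1Valid τ) (hper : 0 < per)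
    (hstep : ∀ t, G.step σ τ (c t) = c (t + 1)) (hp : ∀ t, c (t + per) = c t) :
    PGame.IsCycle (G.E0 σ) per c :=
  ⟨hper, fun t => (hstep t) ▸ step_E0 hτ (c t), hp⟩

omit [Fintype V] in
lemma isCycle_E1 {per : ℕ} {c : ℕ → V} (hσ : G.Strat0Valid σ) (hper : 0 < per)
    (hstep : ∀ t, G.step σ τ (c t) = c (t + 1)) (hp : ∀ t, c (t + per) = c t) :
    PGame.IsCycle (G.E1 τ) per c :=
  ⟨hper, fun t => (hstep t) ▸ step_E1 hσ (c t), hp⟩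

lemma theta_of_not_reach (hσ : G.Admissible0 top σ) (hτ : G.Strat1Valid τ) (v : V)
    (hnot : ¬ ∃ n, G.play σ τ v n = top) : theta G top σ τ v = EV.pos := by
  push_neg at hnot
  obtain ⟨i, per, c, hper, hc, hp, hnt, hstep⟩ := play_cycle v hnot
  obtain ⟨i0, he, hm⟩ := hσ.2 per c (isCycle_E0 hτ hper hstep hp) hnt
  have hcper : ∀ t k, c (t + per * k) = c t := by
    intro t k
    induction k with
    | zero => simp
    | succ k ih => rw [Nat.mul_succ, ← Nat.add_assoc, hp, ih]
  have hq : InfOft G σ τ v (G.p (c i0)) ∧ Even (G.p (c i0)) ∧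
      ∀ q', InfOft G σ τ v q' → q' ≤ G.p (c i0) := by
    refine ⟨?_, he, ?_⟩
    · intro n
      refine ⟨i + i0 + per * n, by nlinarith, ?_⟩
      have : G.play σ τ v (i + (i0 + per * n)) = c (i0 + per * n) := (hc _).symm
      rw [show i + i0 + per * n = i + (i0 + per * n) by omega, this, hcper]
    · intro q' hq'
      obtain ⟨m, hm1, hm2⟩ := hq' i
      have : G.play σ τ v m = c (m - i) := by
        rw [hc (m - i), show i + (m - i) = m by omega]
      rw [this] at hm2
      rw [← hm2]
      exact hm _
  rw [theta, dif_neg (by push_neg; exact hnot), if_pos ⟨G.p (c i0), hq.1, hq.2.1, hq.2.2⟩]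

/-- Against an admissible player-1 strategy, every play reaches the sink. -/
lemma play_reaches (hσ : G.Admissible0 top σ) (hτ : G.Admissible1 top τ) (v : V) :
    ∃ n, G.play σ τ v n = top := by
  by_contra hnot
  push_neg at hnot
  obtain ⟨i, per, c, hper, hc, hp, hnt, hstep⟩ := play_cycle v hnot
  obtain ⟨i0, he, hm0⟩ := hσ.2 per c (isCycle_E0 hτ.1 hper hstep hp) hnt
  obtain ⟨i1, ho, hm1⟩ := hτ.2 per c (isCycle_E1 hσ.1 hper hstep hp) hnt
  have h1 : G.p (c i0) = G.p (c i1) := le_antisymm (hm1 i0) (hm0 i1)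
  rw [h1] at he
  exact (Int.not_odd_iff_even.mpr he) ho

end Cycles2
section MinPath

lemma finset_exists_min (S : Finset ℤ) :
    ∀ s : Finset (ℤ → ℕ), s.Nonempty → (∀ B ∈ s, ∀ q ∉ S, B q = 0) →
    ∃ B ∈ s, ∀ C ∈ s, ele (EV.fin B) (EV.fin C) := by
  classical
  intro s
  induction s using Finset.cons_induction with
  | empty => intro hs _; simp at hs
  | cons a s' ha ih =>
    intro _ hsupp
    by_cases h' : s'.Nonempty
    · obtain ⟨B, hB, hBmin⟩ := ih h'
        (fun B hB q hq => hsupp B (Finset.mem_cons.mpr (Or.inr hB)) q hq)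
      by_cases hab : a = B
      · refine ⟨B, Finset.mem_cons.mpr (Or.inr hB), fun C hC => ?_⟩
        rcases Finset.mem_cons.mp hC with rfl | hC'
        · exact Or.inr (by rw [hab])
        · exact hBmin C hC'
      · have hd : ∀ q ∉ S, a q = B q := fun q hq =>
          (hsupp a (Finset.mem_cons.mpr (Or.inl rfl)) q hq).trans
            (hsupp B (Finset.mem_cons.mpr (Or.inr hB)) q hq).symm
        rcases vlt_total S hd hab with h | h
        · refine ⟨a, Finset.mem_cons.mpr (Or.inl rfl), fun C hC => ?_⟩
          rcases Finset.mem_cons.mp hC with rfl | hC'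
          · exact ele_refl _
          · exact ele_trans (Or.inl h : ele (EV.fin a) (EV.fin B)) (hBmin C hC')
        · refine ⟨B, Finset.mem_cons.mpr (Or.inr hB), fun C hC => ?_⟩
          rcases Finset.mem_cons.mp hC with rfl | hC'
          · exact (Or.inl h : ele (EV.fin B) (EV.fin C))
          · exact hBmin C hC'
    · rw [Finset.not_nonempty_iff_eq_empty] at h'
      subst h'
      refine ⟨a, Finset.mem_cons.mpr (Or.inl rfl), fun C hC => ?_⟩
      rcases Finset.mem_cons.mp hC with rfl | hC'
      · exact ele_refl _
      · simp at hC'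

variable {V : Type} [Fintype V] {G : PGame V} {top : V} {σ : V → V}

lemma vec_supp (G : PGame V) (l : List V) :
    ∀ q ∉ Finset.image G.p Finset.univ, vec G l q = 0 := by
  intro q hq
  by_contra h
  obtain ⟨x, hx, rfl⟩ := (vec_pos_iff G l q).mp (Nat.pos_of_ne_zero h)
  exact hq (Finset.mem_image.mpr ⟨x, Finset.mem_univ x, rfl⟩)

lemma exists_min_path (hσ : G.Admissible0 top σ)
    (hex : ∀ w, ∃ l, PathL (G.E0 σ) top w l top) (v : V) :
    ∃ l0, PathL (G.E0 σ) top v l0 top ∧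
      ∀ l, PathL (G.E0 σ) top v l top → ele (EV.fin (vec G l0)) (EV.fin (vec G l)) := by
  classical
  set S : Finset ℤ := Finset.image G.p Finset.univ with hS
  set N := Fintype.card V with hN
  set cand : Finset (ℤ → ℕ) := (Finset.univ (α := (S → Fin (N+1)))).image
      (fun f => fun q => if h : q ∈ S then (f ⟨q, h⟩ : ℕ) else 0) with hcand
  have hmem : ∀ l : List V, l.length ≤ N → vec G l ∈ cand := by
    intro l hlen
    refine Finset.mem_image.mpr ⟨fun q => ⟨vec G l q.val, ?_⟩, Finset.mem_univ _, ?_⟩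
    · have := vec_le_length G l q.val
      omega
    · funext q
      by_cases h : q ∈ S
      · simp [h]
      · simp [h, vec_supp G l q h]
  set T := cand.filter (fun B => ∃ l, PathL (G.E0 σ) top v l top ∧ vec G l = B) with hT
  have hTne : T.Nonempty := by
    obtain ⟨l, hl⟩ := hex v
    obtain ⟨l', h1, h2, h3⟩ := reduce_path hσ l.length v l le_rfl hl
    exact ⟨vec G l', Finset.mem_filter.mpr ⟨hmem l' h2, l', h1, rfl⟩⟩
  obtain ⟨B0, hB0T, hB0min⟩ := finset_exists_min S T hTne (by
    intro B hB q hq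
    obtain ⟨-, l, -, rfl⟩ := Finset.mem_filter.mp hB
    exact vec_supp G l q hq)
  obtain ⟨-, l0, hl0, hvl0⟩ := Finset.mem_filter.mp hB0T
  refine ⟨l0, hl0, ?_⟩
  intro l hl
  obtain ⟨l', h1, h2, h3⟩ := reduce_path hσ l.length v l le_rfl hl
  have hmem' : vec G l' ∈ T := Finset.mem_filter.mpr ⟨hmem l' h2, l', h1, rfl⟩
  exact ele_trans (hvl0 ▸ hB0min _ hmem') h3

end MinPath
section Main

variable {V : Type} [Fintype V] {G : PGame V} {top : V} {σ : V → V}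

open Classical in
lemma exists_opt (hsg : G.IsSinkGame top) (hσ : G.Admissible0 top σ) :
    ∃ τbar, OptCounter1 G top σ τbar ∧ ∀ v, ∃ B, theta G top σ τbar v = EV.fin B := by
  classical
  obtain ⟨hsink, -, τ0, hτ0⟩ := hsg
  -- every vertex has a path to top in E0 σ
  have hex : ∀ w, ∃ l, PathL (G.E0 σ) top w l top := by
    intro w
    obtain ⟨n, hn⟩ := play_reaches hσ hτ0 w
    have h' : ∃ k, G.play σ τ0 w k = top := ⟨n, hn⟩
    exact ⟨_, play_path hτ0.1 (Nat.find h') w (Nat.find_spec h')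
      (fun j hj => Nat.find_min h' hj)⟩
  choose lmin hlmin1 hlmin2 using fun v => exists_min_path hσ hex v
  set m : V → (ℤ → ℕ) := fun v => vec G (lmin v) with hm
  have hltop : lmin top = [] := by
    cases hl : lmin top with
    | nil => rfl
    | cons a rest =>
      have hp := hlmin1 top
      rw [hl] at hp
      exact absurd rfl hp.2.1
  have hmtop : ∀ q, m top q = 0 := by
    intro q
    simp [hm, hltop, vec]
  -- Bellman upper bound along any edge
  have hup : ∀ v, v ≠ top → ∀ u, G.E0 σ v u →
      ele (EV.fin (m v)) (EV.fin (addp (G.p v) (m u))) := by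
    intro v hv u hR
    have hpath : PathL (G.E0 σ) top v (v :: lmin u) top := by
      refine ⟨rfl, hv, ?_, ?_⟩
      · rw [pathL_headD (hlmin1 u)]; exact hR
      · rw [pathL_headD (hlmin1 u)]; exact hlmin1 u
    have h := hlmin2 v (v :: lmin u) hpath
    rwa [vec_cons] at h
  -- Bellman equation at optimal successor
  have hdecomp : ∀ v, v ≠ top → ∃ u, G.E0 σ v u ∧ m v = addp (G.p v) (m u) := by
    intro v hv
    cases hl : lmin v with
    | nil =>
      have hp := hlmin1 v
      rw [hl] at hp
      exact absurd hp hv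
    | cons a rest =>
      have hp := hlmin1 v
      rw [hl] at hp
      obtain ⟨ha, -, hR, hrest⟩ := hp
      refine ⟨rest.headD top, hR, ?_⟩
      have h1 := hup v hv _ hR
      have h5 : m v = addp (G.p v) (vec G rest) := by
        simp only [hm]
        rw [hl, vec_cons, ha]
      have h2 : ele (EV.fin (addp (G.p v) (m (rest.headD top)))) (EV.fin (m v)) := by
        rw [h5]
        exact ele_addp (hlmin2 _ rest hrest)
      have h6 := ele_antisymm h1 h2
      rwa [EV.fin.injEq] at h6
  choose bs hbsR hbseq using hdecomp
  set τbar : V → V := fun v => if hv : v = top then top else bs v hv with hτbar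
  have hvalid : G.Strat1Valid τbar := by
    intro v hv0
    by_cases hv : v = top
    · simp only [hτbar, dif_pos hv]
      rw [hv]
      exact (hsink.2 _).mpr rfl
    · simp only [hτbar, dif_neg hv]
      have := hbsR v hv
      unfold PGame.E0 at this
      rwa [if_neg (by simp [hv0])] at this
  -- the step equation for the greedy play
  have hstepeq : ∀ v, v ≠ top → m v = addp (G.p v) (m (G.step σ τbar v)) := by
    intro v hv
    by_cases h0 : G.isP0 v = true
    · have hs : G.step σ τbar v = σ v := by unfold PGame.step; rw [if_pos h0]
      have hbseq' := hbseq v hv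
      have hbs : bs v hv = σ v := by
        have := hbsR v hv
        unfold PGame.E0 at this
        rwa [if_pos h0] at this
      rw [hs, ← hbs]
      exact hbseq'
    · have hb : G.isP0 v = false := by simpa using h0
      have hs : G.step σ τbar v = bs v hv := by
        unfold PGame.step
        rw [if_neg (by simp [hb]), hτbar]
        simp only [dif_neg hv]
      rw [hs]
      exact hbseq v hv
  -- telescoping the value along the greedy play
  have htel : ∀ v n, (∀ j, j < n → G.play σ τbar v j ≠ top) → ∀ q,
      m v q = vec G ((List.range n).map (G.play σ τbar v)) q + m (G.play σ τbar v n) q := by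
    intro v n
    induction n with
    | zero => intro _ q; simp [vec, PGame.play]
    | succ n ih =>
      intro hj q
      have ihq := ih (fun j hjn => hj j (by omega)) q
      have h1 : m (G.play σ τbar v n) q
          = m (G.play σ τbar v (n+1)) q + (if q = G.p (G.play σ τbar v n) then 1 else 0) := by
        have := congrFun (hstepeq (G.play σ τbar v n) (hj n (by omega))) q
        rw [play_succ']
        simpa [addp] using this
      have h2 : vec G ((List.range (n+1)).map (G.play σ τbar v)) q
          = vec G ((List.range n).map (G.play σ τbar v)) q
            + (if q = G.p (G.play σ τbar v n) then 1 else 0) := by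
        rw [List.range_succ, List.map_append, vec_append]
        congr 1
        simp only [List.map_cons, List.map_nil, vec_cons, addp]
        simp [vec]
      rw [h2, ihq, h1]
      omega
  -- the greedy play reaches top
  have hreach : ∀ v, ∃ n, G.play σ τbar v n = top := by
    intro v
    by_contra hnot
    push_neg at hnot
    obtain ⟨i, per, hper, hp⟩ := play_periodic (σ := σ) (τ := τbar) v
    set q0 := G.p (G.play σ τbar v i) with hq0
    have e1 := htel v i (fun j _ => hnot j) q0
    have e2 := htel v (i + per) (fun j _ => hnot j) q0
    have hpe : G.play σ τbar v (i + per) = G.play σ τbar v i := by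
      have := hp 0
      simpa using this
    rw [hpe] at e2
    have hpre : vec G ((List.range i).map (G.play σ τbar v)) q0 + 1
        ≤ vec G ((List.range (i + per)).map (G.play σ τbar v)) q0 := by
      rw [List.range_add, List.map_append, vec_append]
      have hpos : 0 < vec G ((List.map (fun x => i + x) (List.range per)).map
          (G.play σ τbar v)) q0 := by
        rw [vec_pos_iff]
        refine ⟨G.play σ τbar v (i + 0), ?_, by simp [hq0]⟩
        rw [List.map_map]
        exact List.mem_map.mpr ⟨0, List.mem_range.mpr hper, rfl⟩
      rw [List.map_map] at hpos ⊢
      omega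
    omega
  -- value of the greedy play
  have hth : ∀ v, theta G top σ τbar v = EV.fin (m v) := by
    intro v
    have h := hreach v
    rw [theta_eq_vec v h]
    congr 1
    funext q
    have := htel v (Nat.find h) (fun j hj => Nat.find_min h hj) q
    rw [Nat.find_spec h] at this
    rw [this, hmtop]
    omega
  refine ⟨τbar, ⟨hvalid, ?_⟩, fun v => ⟨m v, hth v⟩⟩
  intro τ hτ v
  rw [hth v]
  by_cases hr : ∃ n, G.play σ τ v n = top
  · rw [theta_eq_vec v hr]
    exact hlmin2 v _ (play_path hτ (Nat.find hr) v (Nat.find_spec hr)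
      (fun j hj => Nat.find_min hr hj))
  · rw [theta_of_not_reach hσ hτ v hr]
    exact Or.inl trivial

end Main

/-- For an admissible player 0 strategy `σ` in a sink parity game, no play value against a
player 1 strategy is `-∞`, and the `⊴`-minimum over player 1 strategies (realized by an
optimal counterstrategy) is a finite vector: the valuation `Ξ_σ` takes values in `Z_{≥0}^Q`. -/
theorem stmt4 {V : Type} [Fintype V] (G : PGame V) (top : V) (hsg : G.IsSinkGame top)
    (σ : V → V) (hσ : G.Admissible0 top σ) :
    (∀ τ, G.Strat1Valid τ → ∀ v, theta G top σ τ v ≠ EV.neg) ∧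
    ∃ τbar, OptCounter1 G top σ τbar ∧ ∀ v, ∃ B, theta G top σ τbar v = EV.fin B := by
  constructor
  · intro τ hτ v
    by_cases hr : ∃ n, G.play σ τ v n = top
    · rw [theta_eq_vec v hr]
      simp
    · rw [theta_of_not_reach hσ hτ v hr]
      simp
  · exact exists_opt hsg hσ
end

section
/- The generalized symmetric strategy improvement algorithm considers at least all improving moves considered by symmetric strategy improvement: for any pair of admissible strategies (σ,τ), (I_σ ∩ {(v,\bar{τ}(v))}) ⊆ I_σ ∩ J_σ(τ) and (I_τ ∩ {(v,\bar{σ}(v))}) ⊆ I_τ ∩ J_τ(σ). -/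
/-!
Both inclusions reduce to the fact that an optimal counterstrategy never leaves a better edge
unused. If the optimal counterstrategy `ρ` of player 0 plays `ρ v` although the edge `v → w`
looks better, redirect `ρ` at `v` to `w`. If the play from `w` never comes back to `v`, the
deviation is worth the value of `w` plus the priority of `v`, contradicting optimality
outright. Otherwise it closes a cycle through `v`, whose count vector `D` satisfies
`Θ(w) = D + Θ(ρ v)`. If the top priority of `D` is odd, `w` is worse than `ρ v` after all; if
it is even, the deviation wins the cycle, has value `∞` at `v`, and again beats `ρ` there.
Player 1 is symmetric.
-/

open Finset Function

lemma Function.iterate_update_apply_of_forall_ne {α : Type*} [DecidableEq α] {f : α → α}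
    {v w x : α} {n : ℕ}
    (h : ∀ j < n, f^[j] x ≠ v) : (update f v w)^[n] x = f^[n] x := by
  induction n with
  | zero => rfl
  | succ n ih =>
    rw [iterate_succ_apply', iterate_succ_apply', ih fun j hj => h j (by omega),
      update_of_ne (h n n.lt_succ_self)]

namespace EV

def add (C : ℤ → ℕ) : EV → EV
  | neg => neg
  | fin B => fin (C + B)
  | pos => pos

lemma add_add (C C' : ℤ → ℕ) (x : EV) : add C (add C' x) = add (C + C') x := by
  cases x <;> simp [add, add_assoc]

lemma zero_add (x : EV) : add 0 x = x := by
  cases x <;> simp [add]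

lemma add_injective (C : ℤ → ℕ) : Injective (add C) := by
  intro x y h
  cases x <;> cases y <;> simp_all [add]

end EV

lemma vlt_add_left_iff (C B B' : ℤ → ℕ) : vlt (C + B) (C + B') ↔ vlt B B' := by
  simp only [vlt, Pi.add_apply, ne_eq, add_right_inj, add_lt_add_iff_left]

lemma elt_add_iff (C : ℤ → ℕ) (x y : EV) : elt (EV.add C x) (EV.add C y) ↔ elt x y := by
  cases x <;> cases y <;> simp [EV.add, elt, vlt_add_left_iff]

lemma ele_add_iff (C : ℤ → ℕ) (x y : EV) : ele (EV.add C x) (EV.add C y) ↔ ele x y := by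
  rw [ele, ele, elt_add_iff, (EV.add_injective C).eq_iff]

lemma vlt_add_of_even {D : ℤ → ℕ} {q : ℤ} (hq : D q ≠ 0) (hD : ∀ r, q < r → D r = 0)
    (he : Even q) (B : ℤ → ℕ) : vlt B (D + B) :=
  ⟨q, by simp; omega, fun r hr => by simp [hD r hr], Or.inl ⟨he, by simp; omega⟩⟩

lemma vlt_add_of_odd {D : ℤ → ℕ} {q : ℤ} (hq : D q ≠ 0) (hD : ∀ r, q < r → D r = 0)
    (ho : Odd q) (B : ℤ → ℕ) : vlt (D + B) B :=
  ⟨q, by simp; omega, fun r hr => by simp [hD r hr], Or.inr ⟨ho, by simp; omega⟩⟩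

section PlayValue

variable {V : Type} (p : V → ℤ) (top : V)

def visits (s : ℕ → V) (n : ℕ) : ℤ → ℕ := fun r => #{j ∈ range n | p (s j) = r}

def Recurs (s : ℕ → V) (q : ℤ) : Prop := ∀ n, ∃ m, n ≤ m ∧ p (s m) = q

open Classical in
/-- `theta` as a function of the play alone, so that a deviation of one player becomes a change
of the successor map. -/
noncomputable def playValue (s : ℕ → V) : EV :=
  if h : ∃ n, s n = top then EV.fin (visits p s (Nat.find h))
  else if ∃ q, Recurs p s q ∧ Even q ∧ ∀ q', Recurs p s q' → q' ≤ q then EV.pos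
  else EV.neg

lemma theta_eq_playValue (G : PGame V) (σ τ : V → V) (v : V) :
    theta G top σ τ v = playValue G.p top ((G.step σ τ)^[·] v) := rfl

variable {p}

lemma visits_zero (s : ℕ → V) : visits p s 0 = 0 := by
  ext; simp [visits]

lemma visits_succ (s : ℕ → V) (n : ℕ) :
    visits p s (n + 1) = Pi.single (p (s 0)) 1 + visits p (fun j => s (j + 1)) n := by
  ext r
  simp only [visits, card_filter, sum_range_succ', Pi.add_apply, Pi.single_apply,
    eq_comm (a := r)]
  exact add_comm _ _

lemma visits_congr {s t : ℕ → V} {n : ℕ} (h : ∀ j < n, s j = t j) :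
    visits p s n = visits p t n := by
  ext r
  simp only [visits]
  congr 1
  exact filter_congr fun j hj => by rw [h j (mem_range.1 hj)]

lemma visits_ne_zero_iff {s : ℕ → V} {n : ℕ} {r : ℤ} :
    visits p s n r ≠ 0 ↔ ∃ j < n, p (s j) = r := by
  simp [visits]

lemma recurs_succ_iff {s : ℕ → V} {q : ℤ} :
    Recurs p (fun n => s (n + 1)) q ↔ Recurs p s q := by
  refine ⟨fun H n => ?_, fun H n => ?_⟩
  · obtain ⟨m, hm, hq⟩ := H n
    exact ⟨m + 1, by omega, hq⟩
  · obtain ⟨m, hm, hq⟩ := H (n + 1)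
    exact ⟨m - 1, by omega, show p (s (m - 1 + 1)) = q by rwa [Nat.sub_add_cancel (by omega)]⟩

variable (p)

lemma playValue_eq_add_of_ne_top {s : ℕ → V} (hs : s 0 ≠ top) :
    playValue p top s = EV.add (Pi.single (p (s 0)) 1) (playValue p top fun n => s (n + 1)) := by
  classical
  by_cases h : ∃ n, s n = top
  · have h' : ∃ n, s (n + 1) = top := by
      obtain ⟨_ | n, hn⟩ := h
      · exact absurd hn hs
      · exact ⟨n, hn⟩
    have hfind : Nat.find h = Nat.find h' + 1 := by
      rw [Nat.find_eq_iff]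
      refine ⟨Nat.find_spec h', ?_⟩
      rintro (_ | n) hn
      · exact hs
      · exact Nat.find_min h' (by omega)
    rw [playValue, playValue, dif_pos h, dif_pos h', hfind, visits_succ]
    rfl
  · have h' : ¬∃ n, s (n + 1) = top := fun ⟨n, hn⟩ => h ⟨n + 1, hn⟩
    rw [playValue, playValue, dif_neg h, dif_neg h']
    simp only [recurs_succ_iff]
    split_ifs <;> rfl

lemma playValue_eq_add_visits {n : ℕ} {s : ℕ → V} (h : ∀ j < n, s j ≠ top) :
    playValue p top s = EV.add (visits p s n) (playValue p top fun j => s (j + n)) := by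
  induction n generalizing s with
  | zero => rw [visits_zero, EV.zero_add]; rfl
  | succ n ih =>
    rw [playValue_eq_add_of_ne_top p top (h 0 n.succ_pos),
      ih fun j hj => h (j + 1) (by omega), EV.add_add, visits_succ]
    simp only [add_assoc]

lemma playValue_of_periodic {k : ℕ} {s : ℕ → V} {q : ℤ} (hk : 0 < k)
    (hper : Periodic s k) (hne : ∀ j < k, s j ≠ top)
    (hq : ∃ j < k, p (s j) = q) (hmax : ∀ j < k, p (s j) ≤ q) :
    playValue p top s = if Even q then EV.pos else EV.neg := by
  have hmod : ∀ n, s n = s (n % k) := fun n => by rw [hper.map_mod_nat]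
  have hnotop : ¬∃ n, s n = top := fun ⟨n, hn⟩ =>
    hne _ (Nat.mod_lt n hk) (by rwa [← hmod])
  have hrec : ∀ r, Recurs p s r ↔ ∃ j < k, p (s j) = r := by
    refine fun r => ⟨fun H => ?_, fun ⟨j, hj, hr⟩ n => ?_⟩
    · obtain ⟨m, -, hm⟩ := H 0
      exact ⟨m % k, Nat.mod_lt m hk, by rwa [← hmod]⟩
    · refine ⟨j + k * n, by nlinarith, ?_⟩
      rwa [hmod, Nat.add_mul_mod_self_left, Nat.mod_eq_of_lt hj]
  have htop :
      (∃ q', Recurs p s q' ∧ Even q' ∧ ∀ q'', Recurs p s q'' → q'' ≤ q') ↔ Even q := by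
    simp only [hrec]
    refine ⟨fun ⟨q', ⟨j, hj, hq'⟩, he, hle⟩ => ?_, fun he => ⟨q, hq, he, ?_⟩⟩
    · rwa [le_antisymm (hq' ▸ hmax j hj) (hle q hq)] at he
    · rintro _ ⟨j, hj, rfl⟩
      exact hmax j hj
  rw [playValue, dif_neg hnotop]
  simp only [htop]

end PlayValue

section Orbit

variable {V : Type} (p : V → ℤ) (top : V) {f : V → V}

lemma playValue_orbit_eq_add_of_ne_top {v : V} (hv : v ≠ top) :
    playValue p top (f^[·] v) = EV.add (Pi.single (p v) 1) (playValue p top (f^[·] (f v))) := by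
  simp only [playValue_eq_add_of_ne_top p top (s := (f^[·] v)) hv, iterate_succ_apply,
    iterate_zero_apply]

lemma playValue_orbit_eq_add_visits {n : ℕ} {v : V} (h : ∀ j < n, f^[j] v ≠ top) :
    playValue p top (f^[·] v) =
      EV.add (visits p (f^[·] v) n) (playValue p top (f^[·] (f^[n] v))) := by
  simp only [playValue_eq_add_visits p top h, iterate_add_apply]

variable [DecidableEq V] {v w : V}

lemma playValue_update_of_forall_ne (hv : v ≠ top) (h : ∀ n, f^[n] w ≠ v) :
    playValue p top ((update f v w)^[·] v) =
      EV.add (Pi.single (p v) 1) (playValue p top (f^[·] w)) := by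
  rw [playValue_orbit_eq_add_of_ne_top p top hv, update_self]
  congr 2
  funext n
  exact iterate_update_apply_of_forall_ne fun j _ => h j

/-- If the orbit of `w` reaches `v`, redirecting `f` at `v` to `w` closes a cycle through `v`;
`D` counts the priorities on that cycle and `q` is the largest of them. -/
lemma exists_cycle_of_iterate_eq (hv : v ≠ top) (htop : f top = top) {m : ℕ}
    (hm : f^[m] w = v) :
    ∃ D : ℤ → ℕ, ∃ q, D q ≠ 0 ∧ (∀ r, q < r → D r = 0) ∧
      playValue p top (f^[·] w) = EV.add D (playValue p top (f^[·] (f v))) ∧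
      playValue p top ((update f v w)^[·] v) = if Even q then EV.pos else EV.neg := by
  classical
  have hreach : ∃ m, f^[m] w = v := ⟨m, hm⟩
  clear hm m
  set m := Nat.find hreach
  have hm : f^[m] w = v := Nat.find_spec hreach
  have hmin : ∀ j < m, f^[j] w ≠ v := fun j hj => Nat.find_min hreach hj
  have hg : ∀ j ≤ m, (update f v w)^[j + 1] v = f^[j] w := fun j hj => by
    rw [iterate_succ_apply, update_self,
      iterate_update_apply_of_forall_ne fun i hi => hmin i (by omega)]
  have hper : Periodic ((update f v w)^[·] v) (m + 1) := fun j => by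
    simp only [iterate_add_apply, hg m le_rfl, hm]
  have hfree : ∀ j ≤ m, f^[j] w ≠ top := fun j hj hj' => hv <| by
    rw [← hm, ← Nat.sub_add_cancel hj, iterate_add_apply, hj', iterate_fixed htop]
  have hgfree : ∀ j < m + 1, (update f v w)^[j] v ≠ top := by
    rintro (_ | j) hj
    · exact hv
    · rw [hg j (by omega)]
      exact hfree j (by omega)
  obtain ⟨j₀, hj₀, hmax⟩ :=
    (range (m + 1)).exists_max_image (fun j => p ((update f v w)^[j] v)) ⟨0, by simp⟩
  refine ⟨visits p ((update f v w)^[·] v) (m + 1), p ((update f v w)^[j₀] v), ?_, ?_, ?_, ?_⟩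
  · exact visits_ne_zero_iff.2 ⟨j₀, mem_range.1 hj₀, rfl⟩
  · intro r hr
    by_contra hne
    obtain ⟨j, hj, rfl⟩ := visits_ne_zero_iff.1 hne
    exact absurd (hmax j (mem_range.2 hj)) (not_le.2 hr)
  · rw [playValue_orbit_eq_add_visits p top fun j hj => hfree j hj.le, hm,
      playValue_orbit_eq_add_of_ne_top p top hv, EV.add_add, visits_succ,
      visits_congr fun j hj => hg j hj.le, add_comm]
    rfl
  · exact playValue_of_periodic p top m.succ_pos hper hgfree ⟨j₀, mem_range.1 hj₀, rfl⟩
      fun j hj => hmax j (mem_range.2 hj)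

lemma ele_of_update_ele (hv : v ≠ top) (htop : f top = top)
    (h : ele (playValue p top ((update f v w)^[·] v)) (playValue p top (f^[·] v))) :
    ele (playValue p top (f^[·] w)) (playValue p top (f^[·] (f v))) := by
  rw [playValue_orbit_eq_add_of_ne_top p top (f := f) hv] at h
  by_cases hreach : ∃ m, f^[m] w = v
  · obtain ⟨m, hm⟩ := hreach
    obtain ⟨D, q, hq, hD, hw, hcycle⟩ := exists_cycle_of_iterate_eq p top hv htop hm
    rw [hw]
    rcases hx : playValue p top (f^[·] (f v)) with _ | B | _
    · exact Or.inr rfl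
    · rcases Int.even_or_odd q with he | ho
      · rw [hcycle, if_pos he, hx] at h
        simp [ele, elt, EV.add] at h
      · exact Or.inl (vlt_add_of_odd hq hD ho B)
    · exact Or.inr rfl
  · rwa [playValue_update_of_forall_ne p top hv (not_exists.1 hreach), ele_add_iff] at h

lemma ele_of_ele_update (hv : v ≠ top) (htop : f top = top)
    (h : ele (playValue p top (f^[·] v)) (playValue p top ((update f v w)^[·] v))) :
    ele (playValue p top (f^[·] (f v))) (playValue p top (f^[·] w)) := by
  rw [playValue_orbit_eq_add_of_ne_top p top (f := f) hv] at h
  by_cases hreach : ∃ m, f^[m] w = v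
  · obtain ⟨m, hm⟩ := hreach
    obtain ⟨D, q, hq, hD, hw, hcycle⟩ := exists_cycle_of_iterate_eq p top hv htop hm
    rw [hw]
    rcases hx : playValue p top (f^[·] (f v)) with _ | B | _
    · exact Or.inr rfl
    · rcases Int.even_or_odd q with he | ho
      · exact Or.inl (vlt_add_of_even hq hD he B)
      · rw [hcycle, if_neg (Int.not_even_iff_odd.2 ho), hx] at h
        simp [ele, elt, EV.add] at h
    · exact Or.inr rfl
  · rwa [playValue_update_of_forall_ne p top hv (not_exists.1 hreach), ele_add_iff] at h

end Orbit

namespace PGame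

variable {V : Type} {G : PGame V} {σ τ : V → V} {v w : V}

lemma step_of_isP0 (hv : G.isP0 v = true) : G.step σ τ v = σ v := if_pos hv

lemma step_of_not_isP0 (hv : G.isP0 v = false) : G.step σ τ v = τ v := by
  simp [step, hv]

lemma step_top {top : V} (hsink : G.IsSink top) (hσ : G.Strat0Valid σ) (hτ : G.Strat1Valid τ) :
    G.step σ τ top = top := by
  cases h : G.isP0 top
  · rw [step_of_not_isP0 h]
    exact (hsink.2 _).1 (hτ top h)
  · rw [step_of_isP0 h]
    exact (hsink.2 _).1 (hσ top h)

variable [DecidableEq V]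

lemma step_update_left (hv : G.isP0 v = true) :
    G.step (update σ v w) τ = update (G.step σ τ) v w := by
  funext x
  obtain rfl | hx := eq_or_ne x v
  · simp [step, hv]
  · simp [step, update_of_ne hx]

lemma step_update_right (hv : G.isP0 v = false) :
    G.step σ (update τ v w) = update (G.step σ τ) v w := by
  funext x
  obtain rfl | hx := eq_or_ne x v
  · simp [step, hv]
  · simp [step, update_of_ne hx]

lemma Strat0Valid.update (hσ : G.Strat0Valid σ) (hE : G.E v w) :
    G.Strat0Valid (update σ v w) := by
  intro x hx
  obtain rfl | hxv := eq_or_ne x v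
  · rwa [update_self]
  · rw [update_of_ne hxv]
    exact hσ x hx

lemma Strat1Valid.update (hτ : G.Strat1Valid τ) (hE : G.E v w) :
    G.Strat1Valid (update τ v w) := by
  intro x hx
  obtain rfl | hxv := eq_or_ne x v
  · rwa [update_self]
  · rw [update_of_ne hxv]
    exact hτ x hx

end PGame

section OptimalCounterstrategy

open PGame

variable {V : Type} {G : PGame V} {top : V} {v w : V}

lemma OptCounter0.ele_theta_apply {τ ρ : V → V} (hsink : G.IsSink top)
    (hτ : G.Strat1Valid τ) (hopt : OptCounter0 G top τ ρ) (hv : G.isP0 v = true)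
    (hE : G.E v w) : ele (theta G top ρ τ w) (theta G top ρ τ (ρ v)) := by
  classical
  obtain rfl | hvt := eq_or_ne v top
  · rw [(hsink.2 w).1 hE, (hsink.2 _).1 (hopt.1 _ hv)]
    exact Or.inr rfl
  have hdev := hopt.2 _ (hopt.1.update hE) v
  rw [theta_eq_playValue, theta_eq_playValue, step_update_left hv] at hdev
  have := ele_of_update_ele G.p top hvt (step_top hsink hopt.1 hτ) hdev
  rwa [step_of_isP0 hv] at this

lemma OptCounter1.theta_apply_ele {σ ρ : V → V} (hsink : G.IsSink top)
    (hσ : G.Strat0Valid σ) (hopt : OptCounter1 G top σ ρ) (hv : G.isP0 v = false)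
    (hE : G.E v w) : ele (theta G top σ ρ (ρ v)) (theta G top σ ρ w) := by
  classical
  obtain rfl | hvt := eq_or_ne v top
  · rw [(hsink.2 w).1 hE, (hsink.2 _).1 (hopt.1 _ hv)]
    exact Or.inr rfl
  have hdev := hopt.2 _ (hopt.1.update hE) v
  rw [theta_eq_playValue, theta_eq_playValue, step_update_right hv] at hdev
  have := ele_of_ele_update G.p top hvt (step_top hsink hσ hopt.1) hdev
  rwa [step_of_not_isP0 hv] at this

end OptimalCounterstrategy

theorem stmt8_general {V : Type} (G : PGame V) (top : V) (hsg : G.IsSinkGame top)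
    (σ τ σbar τbar : V → V)
    (hσ : G.Admissible0 top σ) (hτ : G.Admissible1 top τ)
    (hσbar : OptCounter1 G top σ σbar) (hτbar : OptCounter0 G top τ τbar) :
    (({e : V × V | G.isP0 e.1 = true ∧
        elt (theta G top σ σbar (σ e.1)) (theta G top σ σbar e.2)} ∩
      {e : V × V | G.isP0 e.1 = true ∧ e.2 = τbar e.1}) ⊆
     ({e : V × V | G.isP0 e.1 = true ∧
        elt (theta G top σ σbar (σ e.1)) (theta G top σ σbar e.2)} ∩
      {e : V × V | G.isP0 e.1 = true ∧
        ele (theta G top τbar τ (σ e.1)) (theta G top τbar τ e.2)})) ∧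
    (({e : V × V | G.isP0 e.1 = false ∧
        elt (theta G top τbar τ e.2) (theta G top τbar τ (τ e.1))} ∩
      {e : V × V | G.isP0 e.1 = false ∧ e.2 = σbar e.1}) ⊆
     ({e : V × V | G.isP0 e.1 = false ∧
        elt (theta G top τbar τ e.2) (theta G top τbar τ (τ e.1))} ∩
      {e : V × V | G.isP0 e.1 = false ∧
        ele (theta G top σ σbar e.2) (theta G top σ σbar (τ e.1))})) := by
  obtain ⟨hsink, -, -⟩ := hsg
  refine ⟨?_, ?_⟩
  · rintro ⟨v, _⟩ ⟨himp, -, rfl : _ = τbar v⟩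
    exact ⟨himp, himp.1, hτbar.ele_theta_apply hsink hτ.1 himp.1 (hσ.1 v himp.1)⟩
  · rintro ⟨v, _⟩ ⟨himp, -, rfl : _ = σbar v⟩
    exact ⟨himp, himp.1, hσbar.theta_apply_ele hsink hσ.1 himp.1 (hτ.1 v himp.1)⟩

/-- Generalized symmetric strategy improvement considers at least all improving moves of
symmetric strategy improvement: `I_σ ∩ {(v, τ̄ v)} ⊆ I_σ ∩ J_σ(τ)` and
`I_τ ∩ {(v, σ̄ v)} ⊆ I_τ ∩ J_τ(σ)`. -/
theorem stmt8 {V : Type} [Fintype V] (G : PGame V) (top : V) (hsg : G.IsSinkGame top)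
    (σ τ σbar τbar : V → V)
    (hσ : G.Admissible0 top σ) (hτ : G.Admissible1 top τ)
    (hσbar : OptCounter1 G top σ σbar) (hτbar : OptCounter0 G top τ τbar) :
    (({e : V × V | G.isP0 e.1 = true ∧
        elt (theta G top σ σbar (σ e.1)) (theta G top σ σbar e.2)} ∩
      {e : V × V | G.isP0 e.1 = true ∧ e.2 = τbar e.1}) ⊆
     ({e : V × V | G.isP0 e.1 = true ∧
        elt (theta G top σ σbar (σ e.1)) (theta G top σ σbar e.2)} ∩
      {e : V × V | G.isP0 e.1 = true ∧
        ele (theta G top τbar τ (σ e.1)) (theta G top τbar τ e.2)})) ∧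
    (({e : V × V | G.isP0 e.1 = false ∧
        elt (theta G top τbar τ e.2) (theta G top τbar τ (τ e.1))} ∩
      {e : V × V | G.isP0 e.1 = false ∧ e.2 = σbar e.1}) ⊆
     ({e : V × V | G.isP0 e.1 = false ∧
        elt (theta G top τbar τ e.2) (theta G top τbar τ (τ e.1))} ∩
      {e : V × V | G.isP0 e.1 = false ∧
        ele (theta G top σ σbar e.2) (theta G top σ σbar (τ e.1))})) :=
  stmt8_general G top hsg σ τ σbar τbar hσ hτ hσbar hτbar
end

section
/- In the game G_n (defined by Table 1/Figure 2 of the counterexample), the initial strategy σ_0 defined by σ_0(a_i)=a_{i+1} for i ≤ n and σ_0(a_{n+1})=a_{n+1} is admissible: every cycle avoiding the sink a_{n+1} in the subgraph where player 0 follows σ_0 has even highest priority. -/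
/-- Nodes of the game `G_n`: `(true, i)` is `a_i`, `(false, i)` is `d_i` (for `1 ≤ i ≤ n+1`);
other indices are junk nodes that just move to the sink `a_{n+1}`. -/
abbrev VN : Type := Bool × ℕ

/-- Priorities of `G_n`: `p(a_i) = 2i+1` for `i ≤ n`, `p(a_{n+1}) = 1`,
`p(d_i) = 2i+2` (so `p(d_{n+1}) = 2n+4`). -/
def pN (n : ℕ) : VN → ℤ
  | (true, i) => if 1 ≤ i ∧ i ≤ n then 2 * (i : ℤ) + 1 else 1
  | (false, i) => if 1 ≤ i ∧ i ≤ n + 1 then 2 * (i : ℤ) + 2 else 1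

/-- Edges of `G_n`: `a_1 → a_2, d_2`; `a_i → a_1, a_{i+1}, d_{i+1}` for `2 ≤ i ≤ n`;
`a_{n+1} → a_{n+1}` (sink); `d_1 → a_2, d_2`; `d_i → d_1, a_{i+1}, d_{i+1}` for `2 ≤ i ≤ n`;
`d_{n+1} → a_{n+1}`. -/
def EN (n : ℕ) : VN → VN → Prop
  | (true, i), w =>
      if i = n + 1 then w = (true, n + 1)
      else if i = 1 then w = (true, 2) ∨ w = (false, 2)
      else if 2 ≤ i ∧ i ≤ n then w = (true, 1) ∨ w = (true, i + 1) ∨ w = (false, i + 1)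
      else w = (true, n + 1)
  | (false, i), w =>
      if i = n + 1 then w = (true, n + 1)
      else if i = 1 then w = (true, 2) ∨ w = (false, 2)
      else if 2 ≤ i ∧ i ≤ n then w = (false, 1) ∨ w = (true, i + 1) ∨ w = (false, i + 1)
      else w = (true, n + 1)

/-- The game `G_n`: `a`-nodes belong to player 0, `d`-nodes to player 1. -/
def GameN (n : ℕ) : PGame VN := ⟨EN n, Prod.fst, pN n⟩

/-- The initial player 0 strategy: `σ₀(a_i) = a_{i+1}` for `i ≤ n`, `σ₀(a_{n+1}) = a_{n+1}`. -/
def sigma0 (n : ℕ) : VN → VN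
  | (true, i) => if 1 ≤ i ∧ i ≤ n then (true, i + 1) else (true, n + 1)
  | (false, _) => (true, n + 1)

/-- The initial player 1 strategy: `τ₀(d_i) = d_{i+1}` for `i ≤ n`, `τ₀(d_{n+1}) = a_{n+1}`. -/
def tau0 (n : ℕ) : VN → VN
  | (false, i) => if 1 ≤ i ∧ i ≤ n then (false, i + 1) else (true, n + 1)
  | (true, _) => (true, n + 1)

/-!
Under `σ₀` every `a`-node just climbs `a_i → a_{i+1}` until it falls into the sink, so a cycle
avoiding the sink consists of `d`-nodes only. A `d`-node outside `d_1, …, d_n` can only move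
to the sink, hence the cycle lies in `d_1, …, d_n`, whose priorities `2i + 2` are all even.
-/

namespace PGame

variable {V : Type} {R : V → V → Prop} {k : ℕ} {c : ℕ → V}

theorem IsCycle.apply_mod (hc : IsCycle R k c) (j : ℕ) : c j = c (j % k) := by
  have periodic : ∀ m t, c (m + t * k) = c m := by
    intro m t
    induction t with
    | zero => simp
    | succ t ih => rw [Nat.succ_mul, ← Nat.add_assoc, hc.2.2, ih]
  conv_lhs => rw [← Nat.mod_add_div' j k]
  exact periodic _ _

theorem IsCycle.exists_forall_le {β : Type} [LinearOrder β] (hc : IsCycle R k c) (f : V → β) :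
    ∃ i, ∀ j, f (c j) ≤ f (c i) := by
  obtain ⟨i, -, hmax⟩ :=
    Finset.exists_max_image (Finset.range k) (f ∘ c) ⟨0, Finset.mem_range.mpr hc.1⟩
  exact ⟨i, fun j => hc.apply_mod j ▸ hmax _ (Finset.mem_range.mpr (Nat.mod_lt _ hc.1))⟩

theorem topEven_of_forall_even (G : PGame V) (hc : IsCycle R k c)
    (heven : ∀ i, Even (G.p (c i))) : G.TopEven c :=
  let ⟨i, hmax⟩ := hc.exists_forall_le G.p
  ⟨i, heven i, hmax⟩

end PGame

section GameN

variable {n : ℕ} {c : ℕ → VN}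

theorem sigma0_strat0Valid (n : ℕ) : (GameN n).Strat0Valid (sigma0 n) := by
  rintro ⟨b, i⟩ (rfl : b = true)
  simp only [GameN, sigma0, EN]
  split_ifs <;> simp_all; omega

theorem E0_sigma0_true_iff {j : ℕ} {w : VN} :
    (GameN n).E0 (sigma0 n) (true, j) w ↔ w = sigma0 n (true, j) := by
  simp [PGame.E0, GameN]

theorem E0_sigma0_false_iff {j : ℕ} {w : VN} :
    (GameN n).E0 (sigma0 n) (false, j) w ↔ EN n (false, j) w := by
  simp [PGame.E0, GameN]

theorem EN_false_eq_sink {j : ℕ} {w : VN} (hj : ¬(1 ≤ j ∧ j ≤ n)) (h : EN n (false, j) w) :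
    w = (true, n + 1) := by
  simp only [EN] at h
  split_ifs at h <;> first | exact h | omega

theorem pN_false_even {j : ℕ} (hj : 1 ≤ j ∧ j ≤ n) : Even (pN n (false, j)) := by
  rw [pN, if_pos ⟨hj.1, by omega⟩]
  exact ⟨(j : ℤ) + 1, by ring⟩

theorem exists_eq_sink_of_eq_a (hpath : ∀ i, (GameN n).E0 (sigma0 n) (c i) (c (i + 1)))
    {i j : ℕ} (hi : c i = (true, j)) : ∃ m, c m = (true, n + 1) := by
  obtain ⟨t, hj⟩ : ∃ t, n + 1 ≤ j + t := ⟨n + 1, by omega⟩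
  induction t generalizing i j with
  | zero =>
    refine ⟨i + 1, ?_⟩
    have hstep := hpath i
    rwa [hi, E0_sigma0_true_iff, sigma0, if_neg (by omega)] at hstep
  | succ t ih =>
    have hstep := hpath i
    rw [hi, E0_sigma0_true_iff, sigma0] at hstep
    split_ifs at hstep
    · exact ih hstep (by omega)
    · exact ⟨i + 1, hstep⟩

theorem eq_d_of_avoids_sink (hpath : ∀ i, (GameN n).E0 (sigma0 n) (c i) (c (i + 1)))
    (havoid : ∀ i, c i ≠ (true, n + 1)) (i : ℕ) :
    ∃ j, (1 ≤ j ∧ j ≤ n) ∧ c i = (false, j) := by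
  rcases hci : c i with ⟨_ | _, j⟩
  · by_cases hj : 1 ≤ j ∧ j ≤ n
    · exact ⟨j, hj, rfl⟩
    · have hstep := hpath i
      rw [hci, E0_sigma0_false_iff] at hstep
      exact absurd (EN_false_eq_sink hj hstep) (havoid _)
  · obtain ⟨m, hm⟩ := exists_eq_sink_of_eq_a hpath hci
    exact absurd hm (havoid m)

end GameN

theorem stmt9_general (n : ℕ) :
    (GameN n).Admissible0 (true, n + 1) (sigma0 n) := by
  refine ⟨sigma0_strat0Valid n, fun k c hc havoid => ?_⟩
  refine PGame.topEven_of_forall_even _ hc fun i => ?_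
  obtain ⟨j, hj, hi⟩ := eq_d_of_avoids_sink hc.2.1 havoid i
  rw [hi]
  exact pN_false_even hj

/-- In `G_n`, the initial strategy `σ₀` (with `σ₀(a_i) = a_{i+1}` and
`σ₀(a_{n+1}) = a_{n+1}`) is admissible for player 0: every cycle avoiding the sink
`a_{n+1}` in the subgraph where player 0 follows `σ₀` has even highest priority. -/
theorem stmt9 (n : ℕ) (hn : 1 ≤ n) :
    (GameN n).Admissible0 (true, n + 1) (sigma0 n) :=
  stmt9_general n
end
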